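/- arXiv:math/9801016 — 2 statements merged into one kernel-verified Lean document; each statement's English description precedes it below -/
import Mathlib

section
/- If a(n) denotes the number of vertically convex polyominoes of area n (equivalently, a(n) = Σ over compositions (a_1,...,a_r) with a_1+...+a_r = n of ∏_{i=1}^{r-1}(a_i+a_{i+1}-1)), then a(n) satisfies the linear recurrence a(n) = 5a(n-1) - 7a(n-2) + 4a(n-3) for n ≥ 5, with a(1)=1, a(2)=2, a(3)=6, a(4)=19. -/
/-- The weight-product of a composition: `∏ (aᵢ + aᵢ₊₁ - 1)` over adjacent parts. -/
def adjWt (l : List ℕ) : ℕ := ((l.zip l.tail).map fun p => p.1 + p.2 - 1).prod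

/-- `vcp n` = number of vertically convex polyominoes of area `n`. -/
def vcp (n : ℕ) : ℕ := ∑ c : Composition n, adjWt c.blocks

/-- head-weighted sum -/
def hwt (n : ℕ) : ℕ := ∑ c : Composition n, c.blocks.headI * adjWt c.blocks

lemma comp_blocks_ne_nil {n : ℕ} (c : Composition (n+1)) : c.blocks ≠ [] := by
  intro h
  have := c.blocks_sum
  rw [h] at this
  simp at this

lemma comp_cons {n : ℕ} (c : Composition (n+1)) :
    ∃ a t, c.blocks = a :: t ∧ 0 < a ∧ a ≤ n + 1 ∧ t.sum = n + 1 - a := by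
  obtain ⟨a, t, h⟩ := List.exists_cons_of_ne_nil (comp_blocks_ne_nil c)
  have ha : 0 < a := c.blocks_pos (by rw [h]; exact List.mem_cons_self)
  have hs := c.blocks_sum
  rw [h] at hs
  simp only [List.sum_cons] at hs
  exact ⟨a, t, h, ha, by omega, by omega⟩

def compSplit (n : ℕ) : Composition (n+1) ≃ Σ k : Fin (n+1), Composition (n - k.1) where
  toFun c := ⟨⟨c.blocks.headI - 1, by obtain ⟨a, t, h, ha, hle, _⟩ := comp_cons c; rw [h]; simp; omega⟩,
    ⟨c.blocks.tail, fun hi => c.blocks_pos (List.mem_of_mem_tail hi), by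
      show c.blocks.tail.sum = n - (c.blocks.headI - 1)
      obtain ⟨a, t, h, ha, hle, hs⟩ := comp_cons c; rw [h]; simp; omega⟩⟩
  invFun p := ⟨(p.1.1 + 1) :: p.2.blocks, by
      intro i hi
      rcases List.mem_cons.1 hi with h | h
      · omega
      · exact p.2.blocks_pos h, by
      simp only [List.sum_cons, p.2.blocks_sum]
      have := p.1.2
      omega⟩
  left_inv c := by
    ext1
    show (c.blocks.headI - 1 + 1) :: c.blocks.tail = c.blocks
    obtain ⟨a, t, h, ha, _, _⟩ := comp_cons c
    rw [h]
    simp only [List.headI_cons, List.tail_cons]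
    congr 1
    omega
  right_inv p := rfl

lemma sum_comp_split (n : ℕ) (f : List ℕ → ℕ) :
    ∑ c : Composition (n+1), f c.blocks
      = ∑ k ∈ Finset.range (n+1), ∑ c : Composition (n - k), f ((k+1) :: c.blocks) := by
  rw [← Fin.sum_univ_eq_sum_range (fun k => ∑ c : Composition (n - k), f ((k+1) :: c.blocks)) (n+1)]
  have h : ∑ c : Composition (n+1), f c.blocks
      = ∑ p : Σ k : Fin (n+1), Composition (n - k.1), f ((p.1.1 + 1) :: p.2.blocks) := by
    apply Fintype.sum_equiv (compSplit n)
    intro c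
    show f c.blocks = f ((c.blocks.headI - 1 + 1) :: c.blocks.tail)
    obtain ⟨a, t, hb, ha, _, _⟩ := comp_cons c
    rw [hb]
    simp only [List.headI_cons, List.tail_cons]
    have : a - 1 + 1 = a := by omega
    rw [this]
  rw [h, ← Finset.univ_sigma_univ, Finset.sum_sigma]

lemma sum_comp_zero (f : List ℕ → ℕ) : ∑ c : Composition 0, f c.blocks = f [] := by
  have h : ∀ c : Composition 0, c.blocks = [] := by
    intro c
    have hs := c.blocks_sum
    cases hb : c.blocks with
    | nil => rfl
    | cons a t =>
      have := c.blocks_pos (by rw [hb]; exact List.mem_cons_self)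
      rw [hb] at hs; simp only [List.sum_cons] at hs; omega
  rw [Finset.sum_congr rfl (fun c _ => by rw [h c])]
  rw [Finset.sum_const, Finset.card_univ, composition_card]
  norm_num

lemma adjWt_cons_cons (a b : ℕ) (t : List ℕ) :
    adjWt (a :: b :: t) = (a + b - 1) * adjWt (b :: t) := rfl

lemma key_u (m k : ℕ) :
    (∑ c : Composition (m+1), adjWt ((k+1) :: c.blocks)) = k * vcp (m+1) + hwt (m+1) := by
  rw [vcp, hwt, Finset.mul_sum, ← Finset.sum_add_distrib]
  apply Finset.sum_congr rfl
  intro c _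
  obtain ⟨a, t, h, ha, _, _⟩ := comp_cons c
  rw [h, adjWt_cons_cons]
  have h2 : k + 1 + a - 1 = k + a := by omega
  rw [h2, List.headI_cons, add_mul]

lemma vcp_rec (n : ℕ) :
    vcp (n+1) = 1 + ∑ k ∈ Finset.range n, (k * vcp (n-k) + hwt (n-k)) := by
  rw [vcp, sum_comp_split n adjWt, Finset.sum_range_succ]
  have hlast : (∑ c : Composition (n - n), adjWt ((n+1) :: c.blocks)) = 1 := by
    rw [Nat.sub_self, sum_comp_zero (fun l => adjWt ((n+1) :: l))]
    rfl
  rw [hlast, add_comm]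
  congr 1
  apply Finset.sum_congr rfl
  intro k hk
  have hk' : k < n := Finset.mem_range.1 hk
  obtain ⟨m, hm⟩ : ∃ m, n - k = m + 1 := ⟨n - k - 1, by omega⟩
  rw [hm]
  exact key_u m k

lemma hwt_rec (n : ℕ) :
    hwt (n+1) = (n+1) + ∑ k ∈ Finset.range n, (k+1) * (k * vcp (n-k) + hwt (n-k)) := by
  rw [hwt, sum_comp_split n (fun l => l.headI * adjWt l), Finset.sum_range_succ]
  have hlast : (∑ c : Composition (n - n), ((n+1) :: c.blocks).headI * adjWt ((n+1) :: c.blocks)) = n+1 := by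
    rw [Nat.sub_self, sum_comp_zero (fun l => ((n+1) :: l).headI * adjWt ((n+1) :: l))]
    simp [adjWt]
  rw [hlast, add_comm]
  congr 1
  apply Finset.sum_congr rfl
  intro k hk
  have hk' : k < n := Finset.mem_range.1 hk
  simp only [List.headI_cons]
  rw [← Finset.mul_sum]
  obtain ⟨m, hm⟩ : ∃ m, n - k = m + 1 := ⟨n - k - 1, by omega⟩
  rw [hm, key_u]

def Pz (n : ℕ) : ℤ := ∑ k ∈ Finset.range n, ((k : ℤ) * vcp (n-k) + hwt (n-k))
def Qz (n : ℕ) : ℤ := ∑ k ∈ Finset.range n, ((k : ℤ) + 1) * ((k : ℤ) * vcp (n-k) + hwt (n-k))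
def Rz (n : ℕ) : ℤ := ∑ k ∈ Finset.range n, (vcp (n-k) : ℤ)
def Sz (n : ℕ) : ℤ := ∑ k ∈ Finset.range n, (hwt (n-k) : ℤ)

lemma vcp_recZ (n : ℕ) : (vcp (n+1) : ℤ) = 1 + Pz n := by
  have h := vcp_rec n
  rw [Pz]
  exact_mod_cast h

lemma hwt_recZ (n : ℕ) : (hwt (n+1) : ℤ) = (n : ℤ) + 1 + Qz n := by
  have h := hwt_rec n
  rw [Qz]
  exact_mod_cast h

lemma Rz_succ (n : ℕ) : Rz (n+1) = Rz n + (vcp (n+1) : ℤ) := by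
  rw [Rz, Rz, Finset.sum_range_succ']
  simp [Nat.succ_sub_succ]

lemma Sz_succ (n : ℕ) : Sz (n+1) = Sz n + (hwt (n+1) : ℤ) := by
  rw [Sz, Sz, Finset.sum_range_succ']
  simp [Nat.succ_sub_succ]

lemma Pz_succ (n : ℕ) : Pz (n+1) = Pz n + Rz n + (hwt (n+1) : ℤ) := by
  rw [Pz, Pz, Rz, Finset.sum_range_succ']
  simp only [Nat.succ_sub_succ, Nat.sub_zero, Nat.cast_zero, zero_mul, zero_add, Nat.cast_add,
    Nat.cast_one]
  rw [← Finset.sum_add_distrib]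
  congr 1
  apply Finset.sum_congr rfl
  intro k _
  ring

lemma Qz_succ (n : ℕ) :
    Qz (n+1) = Qz n + 2 * Pz n + 2 * Rz n - Sz n + (hwt (n+1) : ℤ) := by
  rw [Qz, Qz, Pz, Rz, Sz, Finset.sum_range_succ']
  simp only [Nat.succ_sub_succ, Nat.sub_zero, Nat.cast_zero, zero_mul, zero_add, Nat.cast_add,
    Nat.cast_one, one_mul]
  rw [Finset.mul_sum, Finset.mul_sum, ← Finset.sum_add_distrib, ← Finset.sum_add_distrib,
    ← Finset.sum_sub_distrib]
  congr 1
  apply Finset.sum_congr rfl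
  intro k _
  ring

lemma vcp_key (m : ℕ) :
    (vcp (m+5) : ℤ) = 5 * vcp (m+4) - 7 * vcp (m+3) + 4 * vcp (m+2) := by
  have A0 : (vcp (m+1) : ℤ) = 1 + Pz m := vcp_recZ m
  have A1 : (vcp (m+2) : ℤ) = 1 + Pz (m+1) := vcp_recZ (m+1)
  have A2 : (vcp (m+3) : ℤ) = 1 + Pz (m+2) := vcp_recZ (m+2)
  have A3 : (vcp (m+4) : ℤ) = 1 + Pz (m+3) := vcp_recZ (m+3)
  have A4 : (vcp (m+5) : ℤ) = 1 + Pz (m+4) := vcp_recZ (m+4)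
  have B0 : (hwt (m+1) : ℤ) = (m : ℤ) + 1 + Qz m := hwt_recZ m
  have B1 : (hwt (m+2) : ℤ) = (m : ℤ) + 1 + 1 + Qz (m+1) := by
    have := hwt_recZ (m+1); push_cast at this ⊢; linarith
  have B2 : (hwt (m+3) : ℤ) = (m : ℤ) + 2 + 1 + Qz (m+2) := by
    have := hwt_recZ (m+2); push_cast at this ⊢; linarith
  have B3 : (hwt (m+4) : ℤ) = (m : ℤ) + 3 + 1 + Qz (m+3) := by
    have := hwt_recZ (m+3); push_cast at this ⊢; linarith
  have P0 : Pz (m+1) = Pz m + Rz m + (hwt (m+1) : ℤ) := Pz_succ m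
  have P1 : Pz (m+2) = Pz (m+1) + Rz (m+1) + (hwt (m+2) : ℤ) := Pz_succ (m+1)
  have P2 : Pz (m+3) = Pz (m+2) + Rz (m+2) + (hwt (m+3) : ℤ) := Pz_succ (m+2)
  have P3 : Pz (m+4) = Pz (m+3) + Rz (m+3) + (hwt (m+4) : ℤ) := Pz_succ (m+3)
  have Q0 : Qz (m+1) = Qz m + 2 * Pz m + 2 * Rz m - Sz m + (hwt (m+1) : ℤ) := Qz_succ m
  have Q1 : Qz (m+2) = Qz (m+1) + 2 * Pz (m+1) + 2 * Rz (m+1) - Sz (m+1) + (hwt (m+2) : ℤ) :=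
    Qz_succ (m+1)
  have Q2 : Qz (m+3) = Qz (m+2) + 2 * Pz (m+2) + 2 * Rz (m+2) - Sz (m+2) + (hwt (m+3) : ℤ) :=
    Qz_succ (m+2)
  have R0 : Rz (m+1) = Rz m + (vcp (m+1) : ℤ) := Rz_succ m
  have R1 : Rz (m+2) = Rz (m+1) + (vcp (m+2) : ℤ) := Rz_succ (m+1)
  have R2 : Rz (m+3) = Rz (m+2) + (vcp (m+3) : ℤ) := Rz_succ (m+2)
  have S0 : Sz (m+1) = Sz m + (hwt (m+1) : ℤ) := Sz_succ m
  have S1 : Sz (m+2) = Sz (m+1) + (hwt (m+2) : ℤ) := Sz_succ (m+1)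
  linarith

lemma vcp_one : vcp 1 = 1 := by
  have := vcp_rec 0
  simpa using this

lemma hwt_one : hwt 1 = 1 := by
  have := hwt_rec 0
  simpa using this

lemma vcp_two : vcp 2 = 2 := by
  have := vcp_rec 1
  simp [Finset.sum_range_succ, vcp_one, hwt_one] at this
  omega

lemma hwt_two : hwt 2 = 3 := by
  have := hwt_rec 1
  simp [Finset.sum_range_succ, vcp_one, hwt_one] at this
  omega

lemma vcp_three : vcp 3 = 6 := by
  have := vcp_rec 2
  simp [Finset.sum_range_succ, vcp_one, hwt_one, vcp_two, hwt_two] at this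
  omega

lemma hwt_three : hwt 3 = 10 := by
  have := hwt_rec 2
  simp [Finset.sum_range_succ, vcp_one, hwt_one, vcp_two, hwt_two] at this
  omega

lemma vcp_four : vcp 4 = 19 := by
  have := vcp_rec 3
  simp [Finset.sum_range_succ, vcp_one, hwt_one, vcp_two, hwt_two, vcp_three, hwt_three] at this
  omega

theorem vcp_recurrence :
    vcp 1 = 1 ∧ vcp 2 = 2 ∧ vcp 3 = 6 ∧ vcp 4 = 19 ∧
      ∀ n, 5 ≤ n →
        (vcp n : ℤ) = 5 * vcp (n - 1) - 7 * vcp (n - 2) + 4 * vcp (n - 3) := by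
  refine ⟨vcp_one, vcp_two, vcp_three, vcp_four, ?_⟩
  intro n hn
  obtain ⟨m, rfl⟩ : ∃ m, n = m + 5 := ⟨n - 5, by omega⟩
  have e1 : m + 5 - 1 = m + 4 := by omega
  have e2 : m + 5 - 2 = m + 3 := by omega
  have e3 : m + 5 - 3 = m + 2 := by omega
  rw [e1, e2, e3]
  exact vcp_key m
end

section
/- The generating function Σ_n b(n) t^n, where b(n) = Σ over compositions (a_1,...,a_r) of n of ∏_{i=2}^r a_i, equals t(1-t)/(1-3t+t^2) as a formal power series. -/
open PowerSeries

/-- `leftist n` = Σ over compositions `(a₁,…,a_r)` of `n` of `a₂ a₃ ⋯ a_r`. -/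
def leftist (n : ℕ) : ℕ := ∑ c : Composition n, c.blocks.tail.prod

/-- Weighted count of compositions of `n` by the product of all parts. -/
def cfun : ℕ → ℕ
  | 0 => 1
  | (n+1) => ∑ k ∈ Finset.range (n+1), (k+1) * cfun (n - k)
decreasing_by exact Nat.lt_succ_of_le (Nat.sub_le n k)

instance : Unique (Composition 0) where
  default := Composition.ones 0
  uniq c := by
    have h : c.blocks = [] := by
      rcases hb : c.blocks with _ | ⟨a, l⟩
      · rfl
      · exfalso
        have hs := c.blocks_sum
        have hp : 0 < a := c.blocks_pos (by rw [hb]; exact List.mem_cons_self)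
        rw [hb] at hs
        simp at hs
        omega
    ext1
    simp [h, Composition.ones]

def splitEquiv (n : ℕ) :
    Composition (n + 1) ≃ Σ k : Fin (n + 1), Composition (n - k) where
  toFun c := by
    refine ⟨⟨c.blocks.head! - 1, ?_⟩, ⟨c.blocks.tail, ?_, ?_⟩⟩
    · have hne : c.blocks ≠ [] := by
        intro h
        have := c.blocks_sum
        rw [h] at this; simp at this
      have hmem : c.blocks.head! ∈ c.blocks := List.head!_mem_self hne
      have hle : c.blocks.head! ≤ c.blocks.sum := List.single_le_sum (fun x _ => Nat.zero_le x) _ hmem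
      rw [c.blocks_sum] at hle
      omega
    · intro i hi
      exact c.blocks_pos (List.mem_of_mem_tail hi)
    · have hne : c.blocks ≠ [] := by
        intro h
        have := c.blocks_sum
        rw [h] at this; simp at this
      have hmem : c.blocks.head! ∈ c.blocks := List.head!_mem_self hne
      have hpos : 0 < c.blocks.head! := c.blocks_pos hmem
      have hsum : c.blocks.head! + c.blocks.tail.sum = n + 1 := by
        have := c.blocks_sum
        rw [← List.cons_head!_tail hne] at this
        simpa using this
      simp only
      omega
  invFun p := ⟨(p.1.1 + 1) :: p.2.blocks,
    by
      intro i hi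
      rcases List.mem_cons.1 hi with h | h
      · omega
      · exact p.2.blocks_pos h,
    by
      simp only [List.sum_cons, p.2.blocks_sum]
      have := p.1.2
      omega⟩
  left_inv c := by
    have hne : c.blocks ≠ [] := by
      intro h
      have := c.blocks_sum
      rw [h] at this; simp at this
    have hpos : 0 < c.blocks.head! := c.blocks_pos (List.head!_mem_self hne)
    ext1
    simp only
    rw [show c.blocks.head! - 1 + 1 = c.blocks.head! from by omega]
    exact congrArg (fun l => l) (List.cons_head!_tail hne)
  right_inv p := by
    rcases p with ⟨⟨k, hk⟩, c⟩
    refine Sigma.ext ?_ ?_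
    · simp [List.head!]
    · simp only
      refine heq_of_eq_of_heq ?_ (heq_of_eq rfl)
      ext1
      simp [List.head!]

theorem sum_composition_succ {M : Type*} [AddCommMonoid M] (n : ℕ) (f : List ℕ → M) :
    ∑ c : Composition (n + 1), f c.blocks
      = ∑ k ∈ Finset.range (n + 1), ∑ c : Composition (n - k), f ((k + 1) :: c.blocks) := by
  rw [← Fin.sum_univ_eq_sum_range (fun k => ∑ c : Composition (n - k), f ((k + 1) :: c.blocks))]
  rw [show (∑ k : Fin (n + 1), ∑ c : Composition (n - k), f ((k.1 + 1) :: c.blocks))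
      = ∑ p : Σ k : Fin (n + 1), Composition (n - k), f ((p.1.1 + 1) :: p.2.blocks) from by
    rw [← Finset.univ_sigma_univ, Finset.sum_sigma]]
  refine Fintype.sum_equiv (splitEquiv n) _ _ ?_
  intro c
  have hne : c.blocks ≠ [] := by
    intro h
    have := c.blocks_sum
    rw [h] at this; simp at this
  have hpos : 0 < c.blocks.head! := c.blocks_pos (List.head!_mem_self hne)
  show f c.blocks = f ((c.blocks.head! - 1 + 1) :: c.blocks.tail)
  rw [show c.blocks.head! - 1 + 1 = c.blocks.head! from by omega,
    List.cons_head!_tail hne]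

theorem prod_composition_eq (n : ℕ) :
    ∑ c : Composition n, c.blocks.prod = cfun n := by
  induction n using Nat.strong_induction_on with
  | _ n ih =>
    match n with
    | 0 =>
      rw [show (∑ c : Composition 0, c.blocks.prod) = (default : Composition 0).blocks.prod from by
        simp [Unique.eq_default]]
      rw [show (default : Composition 0) = Composition.ones 0 from rfl]
      simp [Composition.ones, cfun]
    | (m+1) =>
      rw [sum_composition_succ m (fun l => l.prod), cfun]
      refine Finset.sum_congr rfl ?_
      intro k hk
      simp only [List.prod_cons]
      rw [← Finset.mul_sum, ih (m - k) (by omega)]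

theorem leftist_succ (n : ℕ) :
    leftist (n + 1) = ∑ k ∈ Finset.range (n + 1), cfun k := by
  rw [leftist, sum_composition_succ n (fun l => l.tail.prod)]
  simp only [List.tail_cons]
  rw [show (∑ k ∈ Finset.range (n + 1), ∑ c : Composition (n - k), c.blocks.prod)
      = ∑ k ∈ Finset.range (n + 1), cfun (n - k) from
    Finset.sum_congr rfl fun k _ => prod_composition_eq (n - k)]
  rw [← Finset.sum_range_reflect]
  refine Finset.sum_congr rfl fun k hk => ?_
  congr 1
  simp at hk
  omega

theorem cfun_rec (m : ℕ) :
    cfun (m + 2) = 2 * cfun (m + 1) + ∑ k ∈ Finset.range (m + 1), cfun k := by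
  conv_lhs => rw [cfun]
  rw [Finset.sum_range_succ']
  have h1 : ∀ k, (m + 1) - (k + 1) = m - k := fun k => by omega
  have h2 : ∀ k ∈ Finset.range (m + 1),
      (k + 1 + 1) * cfun (m + 1 - (k + 1)) = (k + 1) * cfun (m - k) + cfun (m - k) := by
    intro k _
    rw [h1 k]
    ring
  rw [Finset.sum_congr rfl h2, Finset.sum_add_distrib]
  have h3 : (∑ k ∈ Finset.range (m + 1), (k + 1) * cfun (m - k)) = cfun (m + 1) := by
    rw [cfun]
  have h4 : (∑ k ∈ Finset.range (m + 1), cfun (m - k)) = ∑ k ∈ Finset.range (m + 1), cfun k := by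
    rw [← Finset.sum_range_reflect]
    refine Finset.sum_congr rfl fun k hk => ?_
    congr 1
    simp at hk
    omega
  rw [h3, h4]
  simp only [Nat.sub_zero, zero_add, one_mul]
  ring

theorem leftist_rec (m : ℕ) :
    leftist (m + 3) + leftist (m + 1) = 3 * leftist (m + 2) := by
  rw [leftist_succ, leftist_succ, leftist_succ, Finset.sum_range_succ, Finset.sum_range_succ,
    cfun_rec]
  ring

theorem leftist_one : leftist 1 = 1 := by
  rw [leftist_succ]
  simp [cfun]

theorem leftist_two : leftist 2 = 2 := by
  rw [leftist_succ]
  rw [Finset.sum_range_succ, Finset.sum_range_one]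
  simp [cfun]

/-- `Σ_n leftist(n) tⁿ = t(1-t)/(1-3t+t²)` as a formal power series. -/
theorem leftist_gf :
    (PowerSeries.mk fun n => if n = 0 then 0 else (leftist n : ℤ)) *
      (1 - 3 * X + X ^ 2) = X * (1 - X) := by
  set f : ℕ → ℤ := fun n => if n = 0 then 0 else (leftist n : ℤ) with hf
  ext n
  have h3 : (PowerSeries.C (R := ℤ)) (3 : ℤ) = (3 : ℤ⟦X⟧) := by simp
  have expand : (PowerSeries.mk f) * (1 - 3 * X + X ^ 2)
      = PowerSeries.mk f - PowerSeries.C (R := ℤ) 3 * (PowerSeries.mk f * X ^ 1)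
        + PowerSeries.mk f * X ^ 2 := by
    rw [h3]; ring
  rw [expand, map_add, map_sub, PowerSeries.coeff_C_mul,
    PowerSeries.coeff_mul_X_pow' (PowerSeries.mk f) 1 n,
    PowerSeries.coeff_mul_X_pow' (PowerSeries.mk f) 2 n,
    show (X : ℤ⟦X⟧) * (1 - X) = X ^ 1 - X ^ 2 from by ring, map_sub,
    PowerSeries.coeff_X_pow, PowerSeries.coeff_X_pow]
  simp only [coeff_mk]
  match n with
  | 0 => simp [hf]
  | 1 => simp [hf, leftist_one]
  | 2 => simp [hf, leftist_one, leftist_two]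
  | (m+3) =>
    have hrec := leftist_rec m
    simp only [hf, show m + 3 - 1 = m + 2 from rfl, show m + 3 - 2 = m + 1 from rfl]
    norm_num
    omega
end
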